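/- Let α be a finite set and p a probability mass function on α (p(x) ≥ 0 for all x and ∑_{x∈α} p(x) = 1), and let H = ∑_{x∈α} p(x)·log₂(1/p(x)) (with the convention 0·log₂(1/0) = 0). Let t ≥ 2 be an integer and let W ⊆ α be a set with |W| = min(t, |α|) such that p(x) ≤ p(y) for every x ∉ W and every y ∈ W. Then ∑_{x∈W} p(x) ≥ 1 − H/log₂ t. -/
import Mathlib


/-- if `p` is a probability mass function on a finite set `α` with
Shannon entropy `H = ∑ p(x)·log₂(1/p(x))`, `t ≥ 2`, and `W` is a set of `min(t,|α|)`
most likely values of `p`, then `∑_{x ∈ W} p(x) ≥ 1 − H/log₂ t`. -/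
theorem entropy_mass_bound (α : Type) [Fintype α] (p : α → ℝ)
    (hp0 : ∀ x, 0 ≤ p x) (hp1 : ∑ x, p x = 1)
    (t : ℕ) (ht : 2 ≤ t)
    (W : Finset α) (hWcard : W.card = min t (Fintype.card α))
    (hW : ∀ x ∉ W, ∀ y ∈ W, p x ≤ p y) :
    1 - (∑ x, p x * Real.logb 2 (1 / p x)) / Real.logb 2 (t : ℝ) ≤ ∑ x ∈ W, p x := by
  classical
  have ht1 : (1:ℝ) < t := by exact_mod_cast lt_of_lt_of_le one_lt_two ht
  have hL : 0 < Real.logb 2 (t:ℝ) := Real.logb_pos one_lt_two ht1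
  set H := ∑ x, p x * Real.logb 2 (1 / p x) with hH
  set S := ∑ x ∈ W, p x with hSdef
  have hple : ∀ x, p x ≤ 1 := by
    intro x
    rw [← hp1]
    exact Finset.single_le_sum (fun i _ => hp0 i) (Finset.mem_univ x)
  have hterm : ∀ x, 0 ≤ p x * Real.logb 2 (1 / p x) := by
    intro x
    rcases eq_or_lt_of_le (hp0 x) with h | h
    · simp [← h]
    · exact mul_nonneg (hp0 x)
        (Real.logb_nonneg one_lt_two (by rw [le_div_iff₀ h]; simpa using hple x))
  have hsmall : ∀ x ∉ W, (t:ℝ) * p x ≤ 1 := by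
    intro x hx
    have hcardlt : W.card < Fintype.card α := by
      have hss : W ⊂ Finset.univ := Finset.ssubset_univ_iff.mpr
        (by intro h; exact hx (h ▸ Finset.mem_univ x))
      exact Finset.card_lt_card hss
    have hWt : W.card = t := by omega
    calc (t:ℝ) * p x = ∑ _y ∈ W, p x := by
          rw [Finset.sum_const, hWt, nsmul_eq_mul]
      _ ≤ ∑ y ∈ W, p y := Finset.sum_le_sum (fun y hy => hW x hx y hy)
      _ ≤ ∑ y, p y := Finset.sum_le_sum_of_subset_of_nonneg (Finset.subset_univ W)
          (fun i _ _ => hp0 i)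
      _ = 1 := hp1
  have hcompl : ∑ x ∈ Wᶜ, p x = 1 - S := by
    have := Finset.sum_add_sum_compl W p
    rw [hp1] at this
    linarith [this]
  have key : (1 - S) * Real.logb 2 (t:ℝ) ≤ H := by
    calc (1 - S) * Real.logb 2 (t:ℝ) = ∑ x ∈ Wᶜ, p x * Real.logb 2 (t:ℝ) := by
          rw [← Finset.sum_mul, hcompl]
      _ ≤ ∑ x ∈ Wᶜ, p x * Real.logb 2 (1 / p x) := by
          apply Finset.sum_le_sum
          intro x hx
          rcases eq_or_lt_of_le (hp0 x) with h | h
          · simp [← h]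
          · apply mul_le_mul_of_nonneg_left _ (hp0 x)
            apply Real.logb_le_logb_of_le one_lt_two (by positivity)
            rw [le_div_iff₀ h]
            exact hsmall x (Finset.mem_compl.mp hx)
      _ ≤ H := Finset.sum_le_sum_of_subset_of_nonneg (Finset.subset_univ _)
          (fun i _ _ => hterm i)
  have : 1 - S ≤ H / Real.logb 2 (t:ℝ) := (le_div_iff₀ hL).mpr key
  linarith
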